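/- Let X be a Tychonoff space and let Z be a zero-set of X. Then cl_{βX} Z ⊆ int_{βX} υX if and only if Z is contained in a cozero-set of X whose closure in X is pseudocompact. -/

import Mathlib

open Set Topology

/-- A zero-set: the preimage of `{0}` under a continuous real-valued function. -/
def IsZeroSet {Y : Type*} [TopologicalSpace Y] (Z : Set Y) : Prop :=
  ∃ f : C(Y, ℝ), Z = f ⁻¹' {0}

/-- A cozero-set: the complement of a zero-set. -/
def IsCozeroSet {Y : Type*} [TopologicalSpace Y] (C : Set Y) : Prop :=
  IsZeroSet Cᶜ

/-- A space is pseudocompact if every continuous real-valued function on it is bounded. -/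
def IsPseudocompact (Y : Type*) [TopologicalSpace Y] : Prop :=
  ∀ f : C(Y, ℝ), ∃ M : ℝ, ∀ y, |f y| ≤ M

/-- A subset is pseudocompact if it is pseudocompact as a subspace. -/
def IsPseudocompactSet {Y : Type*} [TopologicalSpace Y] (A : Set Y) : Prop :=
  ∀ f : C(A, ℝ), ∃ M : ℝ, ∀ a, |f a| ≤ M

/-- The Hewitt realcompactification `υX`, realized as the subspace of `βX` consisting of
those `p ∈ βX` such that every zero-set of `βX` containing `p` meets `X`. -/
def upsilonSet (X : Type*) [TopologicalSpace X] : Set (StoneCech X) :=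
  {p | ∀ Z : Set (StoneCech X), IsZeroSet Z → p ∈ Z →
    (Z ∩ Set.range (stoneCechUnit : X → StoneCech X)).Nonempty}

/-- `ζX = X ∪ cl_{βX}(βX \ υX)`, as a subset of `βX`. -/
def zetaSet (X : Type*) [TopologicalSpace X] : Set (StoneCech X) :=
  Set.range (stoneCechUnit : X → StoneCech X) ∪ closure (upsilonSet X)ᶜ

/-!
`cl_{βX} A ⊆ υX` holds exactly when every `f ∈ C(X)` is bounded on `A`: a point of `cl_{βX} A`
outside `υX` lies on a zero-set `F = 0` of `βX` missing `X`, and `1 / |F|` is unbounded on `A`;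
conversely, if `f` is unbounded on `A`, the extension of `1 / (1 + |f|)` vanishes somewhere on the
compact set `cl_{βX} A` but nowhere on `X`. For an open `U` this boundedness is equivalent to
pseudocompactness of `cl_X U`: an `f` unbounded on `cl_X U` gives a locally finite sequence of open
sets meeting `U`, and bumps `n • ψₙ` on them sum to a function unbounded on `U`.

Given `cl_{βX} Z ⊆ int_{βX} υX`, an Urysohn function on `βX` vanishing on `cl_{βX} Z` and equal
to `1` off `int_{βX} υX` cuts out the cozero-set. Conversely, `Z` and `X \ C` are disjoint
zero-sets, so their closures in `βX` are disjoint, and the complement of `cl_{βX} (X \ C)` is an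
open set containing `cl_{βX} Z` and contained in `cl_{βX} C ⊆ υX`.
-/

def IsRelPseudocompact {Y : Type*} [TopologicalSpace Y] (A : Set Y) : Prop :=
  ∀ f : C(Y, ℝ), ∃ M : ℝ, ∀ a ∈ A, |f a| ≤ M

theorem IsPseudocompactSet.isRelPseudocompact {Y : Type*} [TopologicalSpace Y] {A B : Set Y}
    (hB : IsPseudocompactSet B) (hAB : A ⊆ B) : IsRelPseudocompact A := fun f =>
  let ⟨M, hM⟩ := hB (f.restrict B)
  ⟨M, fun a ha => hM ⟨a, hAB ha⟩⟩

theorem isCozeroSet_setOf_lt {Y : Type*} [TopologicalSpace Y] (g : C(Y, ℝ)) (r : ℝ) :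
    IsCozeroSet {y | g y < r} :=
  ⟨⟨fun y => max (r - g y) 0, by fun_prop⟩, by ext y; simp⟩

theorem exists_continuous_zero_one_of_isZeroSet {Y : Type*} [TopologicalSpace Y] {Z₁ Z₂ : Set Y}
    (h₁ : IsZeroSet Z₁) (h₂ : IsZeroSet Z₂) (hd : Disjoint Z₁ Z₂) :
    ∃ v : C(Y, ℝ), EqOn v 0 Z₁ ∧ EqOn v 1 Z₂ ∧ ∀ y, v y ∈ Icc (0 : ℝ) 1 := by
  obtain ⟨f, rfl⟩ := h₁
  obtain ⟨k, rfl⟩ := h₂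
  have hpos : ∀ y, 0 < |f y| + |k y| := fun y => by
    by_contra! h
    have hf : f y = 0 := abs_eq_zero.mp (by linarith [abs_nonneg (f y), abs_nonneg (k y)])
    have hk : k y = 0 := abs_eq_zero.mp (by linarith [abs_nonneg (f y), abs_nonneg (k y)])
    exact hd.notMem_of_mem_left hf hk
  refine ⟨⟨fun y => |f y| / (|f y| + |k y|), by fun_prop (disch := exact fun y => (hpos y).ne')⟩,
    fun y hy => ?_, fun y hy => ?_, fun y => ?_⟩
  · simp_all
  · have hf : f y ≠ 0 := fun hf => hd.notMem_of_mem_left hf hy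
    simp_all
  · exact ⟨div_nonneg (abs_nonneg _) (hpos y).le,
      (div_le_one (hpos y)).mpr (le_add_of_nonneg_right (abs_nonneg _))⟩

theorem DenseRange.compl_closure_image_compl_subset {α β : Type*} [TopologicalSpace β]
    {f : α → β} (hf : DenseRange f) (s : Set α) :
    (closure (f '' sᶜ))ᶜ ⊆ closure (f '' s) := by
  refine fun p hp => closure_mono ?_ (hf.open_subset_closure_inter isClosed_closure.isOpen_compl hp)
  rintro _ ⟨hq, x, rfl⟩
  exact ⟨x, by_contra fun hx => hq (subset_closure ⟨x, hx, rfl⟩), rfl⟩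

theorem Topology.IsClosedEmbedding.locallyFinite_image {α β ι : Type*} [TopologicalSpace α]
    [TopologicalSpace β] {e : α → β} (he : IsClosedEmbedding e) {s : ι → Set α}
    (hs : LocallyFinite s) : LocallyFinite fun i => e '' s i := by
  intro z
  by_cases hz : z ∈ range e
  · obtain ⟨y, rfl⟩ := hz
    obtain ⟨t, ht, hfin⟩ := hs y
    rw [he.isInducing.nhds_eq_comap] at ht
    obtain ⟨t', ht', hsub⟩ := ht
    refine ⟨t', ht', hfin.subset ?_⟩
    rintro i ⟨_, ⟨x, hx, rfl⟩, hxt⟩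
    exact ⟨x, hx, hsub hxt⟩
  · refine ⟨(range e)ᶜ, he.isClosed_range.isOpen_compl.mem_nhds hz, ?_⟩
    simp

theorem locallyFinite_ball_of_tendsto {ι : Type*} {c : ι → ℝ}
    (hc : Filter.Tendsto c Filter.cofinite Filter.atTop) (r : ℝ) :
    LocallyFinite fun i => Metric.ball (c i) r := by
  intro x
  refine ⟨Metric.ball x 1, Metric.ball_mem_nhds x one_pos,
    (Filter.eventually_cofinite.mp (hc.eventually_ge_atTop (x + r + 1))).subset ?_⟩
  rintro i ⟨z, hzc, hzx⟩
  rw [Metric.mem_ball, Real.dist_eq, abs_lt] at hzc hzx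
  simp only [mem_ofPred_eq, not_le]
  linarith

section StoneCech

variable {X : Type*} [TopologicalSpace X]

theorem exists_stoneCech_extension (v : C(X, ℝ)) (hv : ∀ x, v x ∈ Icc (0 : ℝ) 1) :
    ∃ V : C(StoneCech X, ℝ), (∀ x, V (stoneCechUnit x) = v x) ∧ ∀ p, V p ∈ Icc (0 : ℝ) 1 := by
  have hc : Continuous fun x => (⟨v x, hv x⟩ : Icc (0 : ℝ) 1) := v.continuous.subtype_mk _
  refine ⟨⟨fun p => ((stoneCechExtend hc p : Icc (0 : ℝ) 1) : ℝ),
    continuous_subtype_val.comp (continuous_stoneCechExtend hc)⟩, fun x => ?_,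
    fun p => (stoneCechExtend hc p).2⟩
  simp [stoneCechExtend_stoneCechUnit]

theorem disjoint_closure_image_stoneCechUnit {Z₁ Z₂ : Set X} (h₁ : IsZeroSet Z₁)
    (h₂ : IsZeroSet Z₂) (hd : Disjoint Z₁ Z₂) :
    Disjoint (closure (stoneCechUnit '' Z₁)) (closure (stoneCechUnit '' Z₂)) := by
  obtain ⟨v, hv₁, hv₂, hv⟩ := exists_continuous_zero_one_of_isZeroSet h₁ h₂ hd
  obtain ⟨V, hVv, -⟩ := exists_stoneCech_extension v hv
  have hclosure : ∀ {Z : Set X} {r : ℝ}, EqOn v (fun _ => r) Z →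
      closure (stoneCechUnit '' Z) ⊆ V ⁻¹' {r} := fun hZ =>
    closure_minimal (image_subset_iff.mpr fun z hz => by simp [hVv, hZ hz])
      (isClosed_singleton.preimage V.continuous)
  exact (disjoint_singleton.mpr zero_ne_one).preimage V |>.mono (hclosure hv₁) (hclosure hv₂)

theorem closure_image_subset_upsilonSet_iff {A : Set X} :
    closure (stoneCechUnit '' A) ⊆ upsilonSet X ↔ IsRelPseudocompact A := by
  constructor
  · intro hA f
    rcases A.eq_empty_or_nonempty with rfl | hne
    · exact ⟨0, by simp⟩
    obtain ⟨W, hWw, hW⟩ := exists_stoneCech_extension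
      ⟨fun x => (1 + |f x|)⁻¹, Continuous.inv₀ (by fun_prop) fun x => by positivity⟩
      fun x => ⟨inv_nonneg.mpr (by positivity),
        inv_le_one_of_one_le₀ (le_add_of_nonneg_right (abs_nonneg _))⟩
    obtain ⟨p, hp, hmin⟩ := isClosed_closure.isCompact.exists_isMinOn (hne.image _).closure
      W.continuous.continuousOn
    have hWp : 0 < W p := by
      refine (hW p).1.lt_of_ne fun h0 => ?_
      obtain ⟨_, hz, x, rfl⟩ := hA hp (W ⁻¹' {0}) ⟨W, rfl⟩ h0.symm
      simp only [mem_preimage, mem_singleton_iff, hWw, ContinuousMap.coe_mk] at hz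
      exact (inv_pos.mpr (by positivity)).ne' hz
    refine ⟨(W p)⁻¹, fun a ha => ?_⟩
    have h := hmin (subset_closure (mem_image_of_mem _ ha))
    simp only [mem_ofPred_eq, hWw, ContinuousMap.coe_mk] at h
    have := (le_inv_comm₀ hWp (by positivity)).mp h
    linarith
  · rintro hA p hp _ ⟨F, rfl⟩ hpF
    by_contra hne
    have hF : ∀ x, F (stoneCechUnit x) ≠ 0 := fun x hx => hne ⟨_, hx, x, rfl⟩
    obtain ⟨M, hM⟩ := hA ⟨fun x => |F (stoneCechUnit x)|⁻¹,
      (F.continuous.comp continuous_stoneCechUnit).abs.inv₀ fun x => abs_ne_zero.mpr (hF x)⟩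
    have hsub : closure (stoneCechUnit '' A) ⊆ {q | 1 ≤ M * |F q|} := by
      refine closure_minimal (image_subset_iff.mpr fun a ha => ?_)
        (isClosed_le continuous_const (by fun_prop))
      have := hM a ha
      simp only [ContinuousMap.coe_mk, abs_inv, abs_abs] at this
      exact (inv_le_iff_one_le_mul₀ (abs_pos.mpr (hF a))).mp this
    have : 1 ≤ M * |F p| := hsub hp
    rw [show F p = 0 from hpF, abs_zero, mul_zero] at this
    exact absurd this (by norm_num)

end StoneCech

section CompletelyRegular

variable {X : Type*} [TopologicalSpace X] [CompletelyRegularSpace X]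

theorem exists_bump_of_mem_isOpen {x : X} {U : Set X} (hU : IsOpen U) (hx : x ∈ U) :
    ∃ ψ : C(X, ℝ), (∀ y, 0 ≤ ψ y) ∧ ψ x = 1 ∧ Function.support ψ ⊆ U := by
  obtain ⟨f, hf, hfx, hfU⟩ := CompletelyRegularSpace.completely_regular_isOpen x U hU hx
  refine ⟨⟨fun y => 1 - f y, by fun_prop⟩, fun y => by simp [unitInterval.le_one],
    by simp [hfx], fun y hy => by_contra fun hyU => hy ?_⟩
  simp [hfU hyU]

theorem exists_continuous_nat_le_of_locallyFinite {U : ℕ → Set X} (hU : ∀ n, IsOpen (U n))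
    (hlf : LocallyFinite U) {y : ℕ → X} (hy : ∀ n, y n ∈ U n) :
    ∃ g : C(X, ℝ), ∀ n : ℕ, (n : ℝ) ≤ g (y n) := by
  choose ψ hψ0 hψ1 hψU using fun n => exists_bump_of_mem_isOpen (hU n) (hy n)
  have hsupp : LocallyFinite fun n => Function.support fun x => ((n : ℕ) : ℝ) * ψ n x :=
    hlf.subset fun n => (Function.support_mul_subset_right _ _).trans (hψU n)
  refine ⟨⟨fun x => ∑ᶠ n : ℕ, (n : ℝ) * ψ n x, continuous_finsum (by fun_prop) hsupp⟩, fun n => ?_⟩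
  calc (n : ℝ) = n * ψ n (y n) := by rw [hψ1, mul_one]
    _ ≤ ∑ᶠ m : ℕ, (m : ℝ) * ψ m (y n) :=
      single_le_finsum n (hsupp.point_finite (y n)) fun m => by have := hψ0 m (y n); positivity

theorem IsRelPseudocompact.finite_setOf_inter_nonempty {A : Set X} (hA : IsRelPseudocompact A)
    {ι : Type*} {U : ι → Set X} (hU : ∀ i, IsOpen (U i)) (hlf : LocallyFinite U) :
    {i | (U i ∩ A).Nonempty}.Finite := by
  by_contra hinf
  set e := Set.Infinite.natEmbedding _ hinf
  choose y hyU hyA using fun n => (e n).2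
  obtain ⟨g, hg⟩ := exists_continuous_nat_le_of_locallyFinite (fun n => hU (e n))
    (hlf.comp_injective (Subtype.val_injective.comp e.injective)) hyU
  obtain ⟨M, hM⟩ := hA g
  obtain ⟨n, hn⟩ := exists_nat_gt M
  linarith [hg n, le_abs_self (g (y n)), hM _ (hyA n)]

theorem IsOpen.isPseudocompactSet_closure {U : Set X} (hU : IsOpen U) (h : IsRelPseudocompact U) :
    IsPseudocompactSet (closure U) := by
  intro f
  by_contra! hunb
  have hdense : Dense (Subtype.val ⁻¹' U : Set (closure U)) := by
    rw [Subtype.dense_iff, Subtype.image_preimage_coe, inter_eq_right.mpr subset_closure]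
  have hopen : ∀ r : ℝ, IsOpen {b : closure U | r < |f b|} := fun r =>
    isOpen_lt continuous_const (by fun_prop)
  choose y hyU hy using fun n : ℕ => hdense.exists_mem_open (hopen n) (hunb n)
  -- The windows `|f| ∈ (|f yₙ| - 1, |f yₙ| + 1)` escape to infinity, so they are locally finite.
  have hwin :
      LocallyFinite fun n => (Subtype.val '' ((|f ·|) ⁻¹' Metric.ball |f (y n)| 1) : Set X) :=
    isClosed_closure.isClosedEmbedding_subtypeVal.locallyFinite_image <|
      (locallyFinite_ball_of_tendsto (Nat.cofinite_eq_atTop ▸ Filter.tendsto_atTop_mono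
        (fun n => (hy n).le) tendsto_natCast_atTop_atTop) 1).preimage_continuous (by fun_prop)
  choose W hW hWf using fun n => isOpen_induced_iff.mp
    ((Metric.isOpen_ball (x := |f (y n)|) (ε := 1)).preimage (by fun_prop : Continuous (|f ·|)))
  have hlf : LocallyFinite fun n => U ∩ W n :=
    hwin.subset fun n x hx => ⟨⟨x, subset_closure hx.1⟩, hWf n ▸ hx.2, rfl⟩
  have hyW : ∀ n, y n ∈ Subtype.val ⁻¹' W n := fun n => by
    rw [hWf n]
    exact Metric.mem_ball_self one_pos
  exact (h.finite_setOf_inter_nonempty (fun n => hU.inter (hW n)) hlf).not_infinite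
    (infinite_univ.mono fun n _ => ⟨y n, ⟨hyU n, hyW n⟩, hyU n⟩)

end CompletelyRegular

theorem closure_subset_interior_upsilon_iff_general (X : Type*) [TopologicalSpace X]
    [CompletelyRegularSpace X] (Z : Set X) (hZ : IsZeroSet Z) :
    closure ((stoneCechUnit : X → StoneCech X) '' Z) ⊆ interior (upsilonSet X) ↔
      ∃ C : Set X, IsCozeroSet C ∧ IsPseudocompactSet (closure C) ∧ Z ⊆ C := by
  constructor
  · intro hZυ
    obtain ⟨G, hG0, hG1, -⟩ := exists_continuous_zero_one_of_isClosed isClosed_closure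
      isOpen_interior.isClosed_compl (disjoint_compl_right_iff_subset.mpr hZυ)
    let g : C(X, ℝ) := G.comp ⟨stoneCechUnit, continuous_stoneCechUnit⟩
    have hCυ : closure (stoneCechUnit '' {x | g x < 1 / 2}) ⊆ upsilonSet X := by
      have hle : closure (stoneCechUnit '' {x | g x < 1 / 2}) ⊆ {p | G p ≤ 1 / 2} :=
        closure_minimal (image_subset_iff.mpr fun x (hx : g x < 1 / 2) => hx.le)
          (isClosed_le G.continuous continuous_const)
      refine hle.trans fun p hp => interior_subset (by_contra fun hp' => ?_)
      have : G p = 1 := hG1 hp'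
      norm_num [this] at hp
    refine ⟨_, isCozeroSet_setOf_lt g (1 / 2),
      (isOpen_lt g.continuous continuous_const).isPseudocompactSet_closure
        (closure_image_subset_upsilonSet_iff.mp hCυ), fun z hz => ?_⟩
    have : G (stoneCechUnit z) = 0 := hG0 (subset_closure (mem_image_of_mem _ hz))
    norm_num [g, this]
  · rintro ⟨C, hC, hpc, hZC⟩
    have hCυ := closure_image_subset_upsilonSet_iff.mpr (hpc.isRelPseudocompact subset_closure)
    have hdisj :=
      disjoint_closure_image_stoneCechUnit hZ hC (disjoint_compl_right_iff_subset.mpr hZC)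
    exact hdisj.subset_compl_right.trans <| interior_maximal
      ((denseRange_stoneCechUnit.compl_closure_image_compl_subset C).trans hCυ)
      isClosed_closure.isOpen_compl

/-- For a zero-set `Z` of a Tychonoff space `X`, `cl_{βX} Z ⊆ int_{βX} υX` if and only if
`Z` is contained in a cozero-set of `X` with pseudocompact closure. -/
theorem closure_subset_interior_upsilon_iff (X : Type*) [TopologicalSpace X] [T2Space X]
    [CompletelyRegularSpace X] (Z : Set X) (hZ : IsZeroSet Z) :
    closure ((stoneCechUnit : X → StoneCech X) '' Z) ⊆ interior (upsilonSet X) ↔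
      ∃ C : Set X, IsCozeroSet C ∧ IsPseudocompactSet (closure C) ∧ Z ⊆ C :=
  closure_subset_interior_upsilon_iff_general X Z hZ
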